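/- Let λ ∈ (0,1). Then the function f : ℝ → ℝ defined by f(c) = exp((c²−1)/c) − c²/(1−λ) has exactly one zero in the open interval (1, ∞); i.e., there exists a unique c ∈ (1, ∞) with f(c) = 0. -/

import Mathlib

/-!
Substituting `c = exp s` turns `c - c⁻¹` into `2 sinh s` and `c²` into `exp (2 s)`, so `f c = 0`
becomes `sinh s - s = -log (1 - λ) / 2`. The left side is a strictly increasing function of `s`
vanishing at `0` and growing at least quadratically, so this equation has exactly one solution,
and it is positive because the right side is.
-/

open Real Set

namespace Real

theorem sq_div_four_sub_half_le_sinh_sub_self {s : ℝ} (hs : 0 ≤ s) : s ^ 2 / 4 - s / 2 ≤ sinh s - s := by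
  have hexp : 1 + s + s ^ 2 / 2 ≤ exp s := quadratic_le_exp_of_nonneg hs
  have hexp_neg : exp (-s) ≤ 1 := exp_le_one_iff.mpr (neg_nonpos.mpr hs)
  rw [sinh_eq]
  linarith

theorem exists_sinh_sub_self_eq {y : ℝ} (hy : 0 ≤ y) : ∃ s, sinh s - s = y := by
  have hcont : ContinuousOn (fun s => sinh s - s) (Icc 0 (2 * y + 2)) := by fun_prop
  have hy_le : y ≤ sinh (2 * y + 2) - (2 * y + 2) :=
    calc y ≤ (2 * y + 2) ^ 2 / 4 - (2 * y + 2) / 2 := by nlinarith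
      _ ≤ _ := sq_div_four_sub_half_le_sinh_sub_self (by linarith)
  obtain ⟨s, -, hs⟩ := intermediate_value_Icc (by linarith) hcont
    (show y ∈ Icc (sinh 0 - 0) _ by simpa using And.intro hy hy_le)
  exact ⟨s, hs⟩

theorem exp_sub_sq_div_eq_zero_iff {a c : ℝ} (ha : 0 < a) (hc : 0 < c) :
    exp ((c ^ 2 - 1) / c) - c ^ 2 / a = 0 ↔ sinh (log c) - log c = -log a / 2 := by
  have hsq : (c ^ 2 - 1) / c = 2 * sinh (log c) := by
    rw [sinh_log hc]
    field_simp
  have hlog : log (c ^ 2 / a) = 2 * log c - log a := by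
    rw [log_div (by positivity) ha.ne', log_pow]
    push_cast
    ring
  rw [sub_eq_zero, ← exp_log (show 0 < c ^ 2 / a by positivity), exp_eq_exp, hsq, hlog]
  constructor <;> intro h <;> linarith

end Real

theorem growth_optimal_f_unique_root_theta_eq_half
    (lam : ℝ) (hlam : lam ∈ Set.Ioo (0:ℝ) 1)
    (f : ℝ → ℝ)
    (hf : ∀ c : ℝ, f c = Real.exp ((c^2 - 1)/c) - c^2 / (1 - lam)) :
    ∃! c : ℝ, c ∈ Set.Ioi (1:ℝ) ∧ f c = 0 := by
  obtain ⟨hlam0, hlam1⟩ := hlam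
  have h1lam : 0 < 1 - lam := by linarith
  have hroot : ∀ c, 0 < c → (f c = 0 ↔ sinh (log c) - log c = -log (1 - lam) / 2) := fun c hc =>
    hf c ▸ exp_sub_sq_div_eq_zero_iff h1lam hc
  have hlog_neg : log (1 - lam) < 0 := log_neg h1lam (by linarith)
  obtain ⟨s, hs⟩ := exists_sinh_sub_self_eq (y := -log (1 - lam) / 2) (by linarith)
  have hs_pos : 0 < s := sinh_sub_id_strictMono.lt_iff_lt.mp (by simp only [sinh_zero]; linarith)
  refine ⟨exp s, ⟨one_lt_exp_iff.mpr hs_pos, (hroot _ (exp_pos s)).mpr (by rwa [log_exp])⟩, ?_⟩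
  rintro c ⟨hc1, hfc⟩
  have hc0 : 0 < c := zero_lt_one.trans hc1
  have hlog_c : log c = s := sinh_sub_id_strictMono.injective ((hroot c hc0).mp hfc |>.trans hs.symm)
  rw [← hlog_c, exp_log hc0]
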